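/- arXiv:2511.02143 — 3 statements merged into one kernel-verified Lean document; each statement's English description precedes it below -/
import Mathlib

section
/- Let k ≥ 1 and let u be a C³ real-valued function on an open neighborhood of (0, s₀) in ℝ × ℝᵏ such that u(0, s) = 0 for all s near s₀, ∂ₜu(0, s₀) = 0, and ∂ₜ²u(0, s₀) ≠ 0. Then there exist a neighborhood V of s₀ and a unique C¹ function T : V → ℝ with T(s₀) = 0 such that, writing u(t, s) = t·v(t, s) with v(t, s) = ∫₀¹ ∂ₜu(σt, s) dσ, one has v(T(s), s) = 0 for all s ∈ V (so u(T(s), s) = 0, and T(s) is the unique root of v(·, s) near 0, i.e. the unique possible nonzero root of u(·, s) near 0); moreover the gradient satisfies ∇ₛT(s₀) = −2·∇ₛ∂ₜu(0, s₀) / ∂ₜ²u(0, s₀). -/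
/-!
Since `u(0, s) = 0`, the fundamental theorem of calculus factors `u(t, s) = t v(s, t)` with the
Hadamard quotient `v(s, t) = ∫₀¹ ∂ₜu(σt, s) dσ`. Differentiating under the integral sign (`∂ₜu`
is `C²`) shows that `v` is `C¹` near `(s₀, 0)`, with `v(s, 0) = ∂ₜu(0, s)` and
`∂ₜv(s₀, 0) = ∂ₜ²u(0, s₀) ∫₀¹ σ dσ = ∂ₜ²u(0, s₀) / 2 ≠ 0`. The implicit function theorem applied
to `v` at `(s₀, 0)` then produces `T`, and its derivative `-(∂ₜv)⁻¹ ∂ₛv` is the stated gradient.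
-/

open Filter Topology Set MeasureTheory

theorem IsCompact.exists_bound_eventually_of_continuousOn {X Y F : Type*} [TopologicalSpace X]
    [TopologicalSpace Y] [SeminormedAddGroup F] {K : Set Y} (hK : IsCompact K)
    {U : Set (X × Y)} (hU : IsOpen U) {G : X × Y → F} (hG : ContinuousOn G U) {x₀ : X}
    (hx₀ : ∀ y ∈ K, (x₀, y) ∈ U) :
    ∃ C, ∀ᶠ x in 𝓝 x₀, ∀ y ∈ K, (x, y) ∈ U ∧ ‖G (x, y)‖ ≤ C := by
  have hsub : {x₀} ×ˢ K ⊆ U := by rintro ⟨x, y⟩ ⟨rfl, hy⟩; exact hx₀ y hy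
  obtain ⟨M, hM⟩ := (isCompact_singleton.prod hK).exists_bound_of_continuousOn (hG.mono hsub)
  obtain ⟨N, N', hN, -, hx₀N, hKN, hNU⟩ := generalized_tube_lemma isCompact_singleton hK
    (hG.norm.isOpen_inter_preimage hU (isOpen_Iio (a := M + 1)))
    fun q hq => ⟨hsub hq, (hM q hq).trans_lt (lt_add_one M)⟩
  exact ⟨M + 1, eventually_of_mem (hN.mem_nhds (hx₀N rfl)) fun x hx y hy =>
    ⟨(hNU ⟨hx, hKN hy⟩).1, (hNU ⟨hx, hKN hy⟩).2.le⟩⟩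

theorem ContinuousOn.aestronglyMeasurable_prodMk_left {X F : Type*} [TopologicalSpace X]
    [TopologicalSpace F] [TopologicalSpace.PseudoMetrizableSpace F] {G : X × ℝ → F}
    {U : Set (X × ℝ)} (hG : ContinuousOn G U) {x₀ : X} {a b : ℝ}
    (hx₀ : ∀ t ∈ uIcc a b, (x₀, t) ∈ U) :
    AEStronglyMeasurable (fun t => G (x₀, t)) (volume.restrict (uIoc a b)) :=
  ((hG.comp (by fun_prop) hx₀).mono uIoc_subset_uIcc).aestronglyMeasurable measurableSet_uIoc

section ParametricIntegral

variable {H E : Type*} [NormedAddCommGroup H] [NormedSpace ℝ H] [NormedAddCommGroup E]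
  [NormedSpace ℝ E] {f : H × ℝ → E} {U : Set (H × ℝ)} {x₀ : H} {a b : ℝ}

theorem DifferentiableAt.hasFDerivAt_comp_prodMk_left {t : ℝ}
    (hf : DifferentiableAt ℝ f (x₀, t)) :
    HasFDerivAt (fun x => f (x, t)) (fderiv ℝ f (x₀, t) ∘L .inl ℝ H ℝ) x₀ :=
  hf.hasFDerivAt.comp x₀ (hasFDerivAt_prodMk_left x₀ t)

theorem DifferentiableAt.hasDerivAt_comp_prodMk_right {t₀ : ℝ}
    (hf : DifferentiableAt ℝ f (x₀, t₀)) :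
    HasDerivAt (fun t => f (x₀, t)) (fderiv ℝ f (x₀, t₀) (0, 1)) t₀ :=
  (hf.hasFDerivAt.comp t₀ (hasFDerivAt_prodMk_right x₀ t₀)).hasDerivAt

theorem DifferentiableAt.hasDerivAt_comp_prodMk_left {g : ℝ × H → E} {t₀ : ℝ}
    (hg : DifferentiableAt ℝ g (t₀, x₀)) :
    HasDerivAt (fun t => g (t, x₀)) (fderiv ℝ g (t₀, x₀) (1, 0)) t₀ :=
  (hg.hasFDerivAt.comp t₀ (hasFDerivAt_prodMk_left (𝕜 := ℝ) t₀ x₀)).hasDerivAt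

theorem hasFDerivAt_intervalIntegral_of_contDiffOn (hU : IsOpen U) (hf : ContDiffOn ℝ 1 f U)
    (hx₀ : ∀ t ∈ uIcc a b, (x₀, t) ∈ U) :
    HasFDerivAt (fun x => ∫ t in a..b, f (x, t))
      (∫ t in a..b, fderiv ℝ f (x₀, t) ∘L .inl ℝ H ℝ) x₀ := by
  have hf' : ContinuousOn (fun q => fderiv ℝ f q ∘L .inl ℝ H ℝ) U :=
    (hf.continuousOn_fderiv_of_isOpen hU le_rfl).clm_comp continuousOn_const
  obtain ⟨C, hC⟩ := isCompact_uIcc.exists_bound_eventually_of_continuousOn hU hf' hx₀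
  refine intervalIntegral.hasFDerivAt_integral_of_dominated_of_fderiv_le (μ := volume)
    (F := fun x t => f (x, t)) (F' := fun x t => fderiv ℝ f (x, t) ∘L .inl ℝ H ℝ)
    (bound := fun _ => C) hC ?_ ?_ (hf'.aestronglyMeasurable_prodMk_left hx₀) ?_
    intervalIntegrable_const ?_
  · exact hC.mono fun x hx =>
      hf.continuousOn.aestronglyMeasurable_prodMk_left fun t ht => (hx t ht).1
  · exact (hf.continuousOn.comp (by fun_prop) hx₀).intervalIntegrable
  · exact .of_forall fun t ht x hx => (hx t (uIoc_subset_uIcc ht)).2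
  · refine .of_forall fun t ht x hx => DifferentiableAt.hasFDerivAt_comp_prodMk_left ?_
    exact (hf.differentiableOn one_ne_zero).differentiableAt
      (hU.mem_nhds (hx t (uIoc_subset_uIcc ht)).1)

theorem contDiffAt_intervalIntegral_of_contDiffOn (hU : IsOpen U) (hf : ContDiffOn ℝ 1 f U)
    (hx₀ : ∀ t ∈ uIcc a b, (x₀, t) ∈ U) :
    ContDiffAt ℝ 1 (fun x => ∫ t in a..b, f (x, t)) x₀ := by
  have hf' : ContinuousOn (fun q => fderiv ℝ f q ∘L .inl ℝ H ℝ) U :=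
    (hf.continuousOn_fderiv_of_isOpen hU le_rfl).clm_comp continuousOn_const
  obtain ⟨C, hC⟩ := isCompact_uIcc.exists_bound_eventually_of_continuousOn hU hf' hx₀
  refine contDiffAt_one_iff.2 ⟨fun x => ∫ t in a..b, fderiv ℝ f (x, t) ∘L .inl ℝ H ℝ, _, hC,
    fun x hx => ?_, fun x hx =>
      hasFDerivAt_intervalIntegral_of_contDiffOn hU hf fun t ht => (hx t ht).1⟩
  refine intervalIntegral.continuousWithinAt_of_dominated_interval (bound := fun _ => C)
    (eventually_nhdsWithin_of_forall fun y hy =>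
      hf'.aestronglyMeasurable_prodMk_left fun t ht => (hy t ht).1)
    (eventually_nhdsWithin_of_forall fun y hy =>
      .of_forall fun t ht => (hy t (uIoc_subset_uIcc ht)).2)
    intervalIntegrable_const (.of_forall fun t ht => ?_)
  exact ((hf'.continuousAt (hU.mem_nhds (hx t (uIoc_subset_uIcc ht)).1)).comp
    (f := fun y => (y, t)) (Continuous.prodMk_left t).continuousAt).continuousWithinAt

theorem sub_eq_smul_intervalIntegral_comp_mul [CompleteSpace E] {γ γ' : ℝ → E} {t : ℝ}
    (hγ : ∀ τ ∈ uIcc 0 t, HasDerivAt γ (γ' τ) τ) (hγ' : IntervalIntegrable γ' volume 0 t) :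
    γ t - γ 0 = t • ∫ σ in (0:ℝ)..1, γ' (σ * t) := by
  rw [intervalIntegral.smul_integral_comp_mul_right, zero_mul, one_mul,
    intervalIntegral.integral_eq_sub_of_hasDerivAt hγ hγ']

theorem hasDerivAt_intervalIntegral_comp_mul_zero [CompleteSpace E] {γ : ℝ → E} {O : Set ℝ}
    (hO : IsOpen O) (hγ : ContDiffOn ℝ 1 γ O) (h0 : 0 ∈ O) :
    HasDerivAt (fun t => ∫ σ in (0:ℝ)..1, γ (σ * t)) ((2:ℝ)⁻¹ • deriv γ 0) 0 := by
  set U := {q : ℝ × ℝ | q.2 * q.1 ∈ O}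
  have hU : IsOpen U := hO.preimage (by fun_prop)
  have hf : ContDiffOn ℝ 1 (fun q : ℝ × ℝ => γ (q.2 * q.1)) U :=
    hγ.comp (by fun_prop : ContDiff ℝ 1 fun q : ℝ × ℝ => q.2 * q.1).contDiffOn fun q hq => hq
  have hγ0 : HasDerivAt γ (deriv γ 0) 0 :=
    ((hγ.differentiableOn one_ne_zero).differentiableAt (hO.mem_nhds h0)).hasDerivAt
  have hpartial : ∀ σ : ℝ, fderiv ℝ (fun q : ℝ × ℝ => γ (q.2 * q.1)) (0, σ) ∘L .inl ℝ ℝ ℝ =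
      σ • ContinuousLinearMap.toSpanSingleton ℝ (deriv γ 0) := by
    intro σ
    have hσ : ((0:ℝ), σ) ∈ U := by simpa [U] using h0
    have h1 := DifferentiableAt.hasFDerivAt_comp_prodMk_left
      ((hf.differentiableOn one_ne_zero).differentiableAt (hU.mem_nhds hσ))
    have h2 : HasDerivAt (fun t => γ (σ * t)) (σ • deriv γ 0) 0 := by
      have hγσ : HasDerivAt γ (deriv γ 0) (σ * id 0) := by simpa using hγ0
      simpa [Function.comp_def] using hγσ.scomp (0 : ℝ) ((hasDerivAt_id (0:ℝ)).const_mul σ)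
    rw [← ContinuousLinearMap.toSpanSingleton_smul]
    exact h1.unique h2.hasFDerivAt
  have := hasFDerivAt_intervalIntegral_of_contDiffOn (x₀ := 0) (a := 0) (b := 1) hU hf
    fun σ _ => by simpa [U] using h0
  simp only [hpartial, intervalIntegral.integral_smul_const, integral_id] at this
  rw [show ((1:ℝ) ^ 2 - 0 ^ 2) / 2 = 2⁻¹ by norm_num,
    ← ContinuousLinearMap.toSpanSingleton_smul] at this
  exact hasDerivAt_iff_hasFDerivAt.2 this

end ParametricIntegral

theorem ContDiffAt.exists_implicitFunction_real {S : Type*} [NormedAddCommGroup S]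
    [NormedSpace ℝ S] [CompleteSpace S] {f : S × ℝ → ℝ} {s₀ : S} {t₀ : ℝ}
    (hf : ContDiffAt ℝ 1 f (s₀, t₀)) (hc : fderiv ℝ f (s₀, t₀) (0, 1) ≠ 0) :
    ∃ T : S → ℝ, ∃ δ > 0, T s₀ = t₀ ∧
      HasFDerivAt T (-(fderiv ℝ f (s₀, t₀) (0, 1))⁻¹ • (fderiv ℝ f (s₀, t₀) ∘L .inl ℝ S ℝ)) s₀ ∧
      ∀ᶠ s in 𝓝 s₀, ContDiffAt ℝ 1 T s ∧ f (s, T s) = f (s₀, t₀) ∧ |T s - t₀| < δ ∧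
        ∀ t, |t - t₀| < δ → f (s, t) = f (s₀, t₀) → t = T s := by
  set c := fderiv ℝ f (s₀, t₀) (0, 1)
  have hinr : fderiv ℝ f (s₀, t₀) ∘L .inr ℝ S ℝ = .toSpanSingleton ℝ c := by ext; simp [c]
  have hc₁ : .toSpanSingleton ℝ c ∘L .toSpanSingleton ℝ c⁻¹ = .id ℝ ℝ := by ext; simp [hc]
  have hc₂ : .toSpanSingleton ℝ c⁻¹ ∘L .toSpanSingleton ℝ c = .id ℝ ℝ := by ext; simp [hc]
  have hinv : (fderiv ℝ f (s₀, t₀) ∘L .inr ℝ S ℝ).IsInvertible := hinr ▸ .of_inverse hc₁ hc₂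
  set T := hf.implicitFunction one_ne_zero hinv
  have hT : ContDiffAt ℝ 1 T s₀ := hf.contDiffAt_implicitFunction one_ne_zero hinv
  have hTs₀ : T s₀ = t₀ := hf.implicitFunction_apply_self one_ne_zero hinv
  obtain ⟨N, hN, δ, hδ, huniq⟩ : ∃ N ∈ 𝓝 s₀, ∃ δ > 0, ∀ s ∈ N, ∀ t, |t - t₀| < δ →
      (f (s, t) = f (s₀, t₀) ↔ T s = t) := by
    have := hf.eventually_apply_eq_iff_implicitFunction one_ne_zero hinv
    rw [nhds_prod_eq, eventually_prod_iff] at this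
    obtain ⟨P, hP, Q, hQ, hPQ⟩ := this
    obtain ⟨δ, hδ, hδQ⟩ := Metric.eventually_nhds_iff.1 hQ
    exact ⟨{s | P s}, hP, δ, hδ, fun s hs t ht => hPQ hs (hδQ ht)⟩
  have hclose : ∀ᶠ s in 𝓝 s₀, |T s - t₀| < δ := by
    have := hT.continuousAt.eventually (Metric.ball_mem_nhds (T s₀) hδ)
    simpa [hTs₀, Real.dist_eq] using this
  refine ⟨T, δ, hδ, hTs₀, ?_, ?_⟩
  · refine (hf.hasStrictFDerivAt_implicitFunction one_ne_zero hinv).hasFDerivAt.congr_fderiv ?_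
    ext s
    simp [hinr, ContinuousLinearMap.inverse_eq hc₁ hc₂, mul_comm]
  · filter_upwards [hT.eventually (by simp), hf.eventually_apply_implicitFunction one_ne_zero hinv,
      hclose, hN] with s hTs hfs hsδ hsN
    exact ⟨hTs, hfs, hsδ, fun t ht hft => ((huniq s hsN t ht).1 hft).symm⟩

section HadamardQuotient

/-- The paper's `v(t, s)`, with the parameter `s` placed first so that the implicit function
theorem solves for the second coordinate. -/
noncomputable def hadamardQuotient {S : Type*} (u : ℝ → S → ℝ) (p : S × ℝ) : ℝ :=
  ∫ σ in (0:ℝ)..1, deriv (fun τ => u τ p.1) (σ * p.2)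

theorem hadamardQuotient_zero {S : Type*} (u : ℝ → S → ℝ) (s : S) :
    hadamardQuotient u (s, 0) = deriv (fun τ => u τ s) 0 := by
  simp [hadamardQuotient]

variable {S : Type*} [NormedAddCommGroup S] [NormedSpace ℝ S] {u : ℝ → S → ℝ} {W : Set (ℝ × S)}
  {s₀ : S}

theorem contDiffOn_deriv_fst {n : WithTop ℕ∞} (hW : IsOpen W)
    (hu : ContDiffOn ℝ (n + 1) (fun p : ℝ × S => u p.1 p.2) W) :
    ContDiffOn ℝ n (fun q : ℝ × S => deriv (fun τ => u τ q.2) q.1) W :=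
  ((hu.fderiv_of_isOpen hW le_rfl).clm_apply contDiffOn_const).congr fun q hq =>
    ((hu.differentiableOn (by simp)).differentiableAt
      (hW.mem_nhds hq)).hasDerivAt_comp_prodMk_left.deriv

theorem eventually_eq_mul_hadamardQuotient (hW : IsOpen W)
    (hu : ContDiffOn ℝ 1 (fun p : ℝ × S => u p.1 p.2) W) (hs₀ : (0, s₀) ∈ W)
    (hu0 : ∀ᶠ s in 𝓝 s₀, u 0 s = 0) :
    ∀ᶠ p in 𝓝 (s₀, 0), u p.2 p.1 = p.2 * hadamardQuotient u p := by
  obtain ⟨r, hr, hrW⟩ := Metric.isOpen_iff.1 hW _ hs₀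
  filter_upwards [hu0.prod_inl_nhds 0,
    prod_mem_nhds (Metric.ball_mem_nhds s₀ hr) (Metric.ball_mem_nhds 0 hr)]
    with ⟨s, t⟩ hs0 ⟨hs, ht⟩
  have hseg : ∀ τ ∈ uIcc 0 t, (τ, s) ∈ W := fun τ hτ => hrW <| by
    have := abs_sub_left_of_mem_uIcc hτ
    simp only [Metric.mem_ball, Real.dist_eq, sub_zero] at ht this ⊢
    rw [Prod.dist_eq, Real.dist_eq, sub_zero]
    exact max_lt (this.trans_lt ht) hs
  have hcont : ContinuousOn (fun q : ℝ × S => deriv (fun τ => u τ q.2) q.1) W :=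
    (contDiffOn_deriv_fst (n := 0) hW (by simpa using hu)).continuousOn
  have := sub_eq_smul_intervalIntegral_comp_mul (γ := fun τ => u τ s)
    (fun τ hτ => ((hu.differentiableOn one_ne_zero).differentiableAt
      (hW.mem_nhds (hseg τ hτ))).hasDerivAt_comp_prodMk_left.differentiableAt.hasDerivAt)
    ((hcont.comp (by fun_prop) hseg).intervalIntegrable)
  simpa [hs0, hadamardQuotient] using this

theorem contDiffAt_hadamardQuotient (hW : IsOpen W)
    (hu : ContDiffOn ℝ 2 (fun p : ℝ × S => u p.1 p.2) W) (hs₀ : (0, s₀) ∈ W) :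
    ContDiffAt ℝ 1 (hadamardQuotient u) (s₀, 0) :=
  contDiffAt_intervalIntegral_of_contDiffOn (U := {q : (S × ℝ) × ℝ | (q.2 * q.1.2, q.1.1) ∈ W})
    (hW.preimage (by fun_prop)) ((contDiffOn_deriv_fst hW hu).comp (by fun_prop) fun q hq => hq)
    fun _ _ => by simpa using hs₀

theorem hasDerivAt_hadamardQuotient_zero (hW : IsOpen W)
    (hu : ContDiffOn ℝ 2 (fun p : ℝ × S => u p.1 p.2) W) (hs₀ : (0, s₀) ∈ W) :
    HasDerivAt (fun t => hadamardQuotient u (s₀, t))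
      (iteratedDeriv 2 (fun t => u t s₀) 0 / 2) 0 := by
  have hγ : ContDiffOn ℝ 1 (deriv fun τ => u τ s₀) {τ | (τ, s₀) ∈ W} :=
    (contDiffOn_deriv_fst hW hu).comp (contDiff_id.prodMk contDiff_const).contDiffOn
      fun τ hτ => hτ
  have := hasDerivAt_intervalIntegral_comp_mul_zero (hW.preimage (by fun_prop)) hγ hs₀
  rwa [iteratedDeriv_succ, iteratedDeriv_one, div_eq_inv_mul]

end HadamardQuotient

theorem stmt0_general (k : ℕ) (u : ℝ → (Fin k → ℝ) → ℝ) (s₀ : Fin k → ℝ)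
    (W : Set (ℝ × (Fin k → ℝ))) (hWopen : IsOpen W) (hW0 : ((0 : ℝ), s₀) ∈ W)
    (hu : ContDiffOn ℝ 3 (fun p => u p.1 p.2) W)
    (hu0 : ∀ᶠ s in 𝓝 s₀, u 0 s = 0)
    (hut : deriv (fun t => u t s₀) 0 = 0)
    (hutt : iteratedDeriv 2 (fun t => u t s₀) 0 ≠ 0) :
    ∃ V ∈ 𝓝 s₀, ∃ T : (Fin k → ℝ) → ℝ, ∃ δ > (0:ℝ),
      ContDiffOn ℝ 1 T V ∧
      T s₀ = 0 ∧
      (∀ s ∈ V, (∫ σ in (0:ℝ)..1, deriv (fun τ => u τ s) (σ * T s)) = 0) ∧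
      (∀ s ∈ V, u (T s) s = 0) ∧
      (∀ s ∈ V, |T s| < δ ∧ ∀ t : ℝ, |t| < δ →
        (∫ σ in (0:ℝ)..1, deriv (fun τ => u τ s) (σ * t)) = 0 → t = T s) ∧
      (∀ T' : (Fin k → ℝ) → ℝ,
        (∀ s ∈ V, |T' s| < δ ∧ (∫ σ in (0:ℝ)..1, deriv (fun τ => u τ s) (σ * T' s)) = 0) →
        Set.EqOn T' T V) ∧
      fderiv ℝ T s₀ = (-2 / iteratedDeriv 2 (fun t => u t s₀) 0) •
        fderiv ℝ (fun s => deriv (fun t => u t s) 0) s₀ := by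
  have hu2 : ContDiffOn ℝ 2 (fun p => u p.1 p.2) W := hu.of_le (by norm_num)
  have hv := contDiffAt_hadamardQuotient hWopen hu2 hW0
  have hvt : fderiv ℝ (hadamardQuotient u) (s₀, 0) (0, 1) =
      iteratedDeriv 2 (fun t => u t s₀) 0 / 2 :=
    (hv.differentiableAt one_ne_zero).hasDerivAt_comp_prodMk_right.unique
      (hasDerivAt_hadamardQuotient_zero hWopen hu2 hW0)
  have hvs : fderiv ℝ (hadamardQuotient u) (s₀, 0) ∘L .inl ℝ (Fin k → ℝ) ℝ =
      fderiv ℝ (fun s => deriv (fun t => u t s) 0) s₀ := by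
    simpa only [hadamardQuotient_zero] using
      (hv.differentiableAt one_ne_zero).hasFDerivAt_comp_prodMk_left.fderiv.symm
  obtain ⟨T, δ, hδ, hTs₀, hT', hT⟩ :=
    hv.exists_implicitFunction_real (by rw [hvt]; exact div_ne_zero hutt two_ne_zero)
  have hfact : ∀ᶠ s in 𝓝 s₀, u (T s) s = T s * hadamardQuotient u (s, T s) := by
    have hlim : Tendsto (fun s => (s, T s)) (𝓝 s₀) (𝓝 (s₀, 0)) := by
      simpa [hTs₀] using (continuousAt_id.prodMk hT'.continuousAt).tendsto
    exact hlim.eventually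
      (eventually_eq_mul_hadamardQuotient hWopen (hu2.of_le (by norm_num)) hW0 hu0)
  simp only [hadamardQuotient_zero, hut, sub_zero] at hT
  refine ⟨_, hT.and hfact, T, δ, hδ, fun s hs => hs.1.1.contDiffWithinAt, hTs₀,
    fun s hs => hs.1.2.1, fun s hs => by rw [hs.2, hs.1.2.1, mul_zero],
    fun s hs => ⟨hs.1.2.2.1, hs.1.2.2.2⟩,
    fun T' hT' s hs => hs.1.2.2.2 _ (hT' s hs).1 (hT' s hs).2, ?_⟩
  rw [hT'.fderiv, hvt, hvs, inv_div, neg_div]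

/-- existence, uniqueness and first-order expansion of the nontrivial return
time at a fold point. If `u` is `C³` near `(0,s₀) ∈ ℝ × ℝᵏ` with `u(0,s) = 0` for `s` near
`s₀`, `∂ₜu(0,s₀) = 0` and `∂ₜ²u(0,s₀) ≠ 0`, then, writing `u(t,s) = t·v(t,s)` with
`v(t,s) = ∫₀¹ ∂ₜu(σt,s) dσ`, there are a neighborhood `V` of `s₀` and a unique `C¹` function
`T : V → ℝ` with `T(s₀) = 0` and `v(T(s),s) = 0` on `V` (so `u(T(s),s) = 0` and `T(s)` is the
unique root of `v(·,s)` near `0`), and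
`∇ₛT(s₀) = −2·∇ₛ∂ₜu(0,s₀)/∂ₜ²u(0,s₀)`. -/
theorem stmt0 (k : ℕ) (hk : 1 ≤ k) (u : ℝ → (Fin k → ℝ) → ℝ) (s₀ : Fin k → ℝ)
    (W : Set (ℝ × (Fin k → ℝ))) (hWopen : IsOpen W) (hW0 : ((0 : ℝ), s₀) ∈ W)
    (hu : ContDiffOn ℝ 3 (fun p => u p.1 p.2) W)
    (hu0 : ∀ᶠ s in 𝓝 s₀, u 0 s = 0)
    (hut : deriv (fun t => u t s₀) 0 = 0)
    (hutt : iteratedDeriv 2 (fun t => u t s₀) 0 ≠ 0) :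
    ∃ V ∈ 𝓝 s₀, ∃ T : (Fin k → ℝ) → ℝ, ∃ δ > (0:ℝ),
      ContDiffOn ℝ 1 T V ∧
      T s₀ = 0 ∧
      (∀ s ∈ V, (∫ σ in (0:ℝ)..1, deriv (fun τ => u τ s) (σ * T s)) = 0) ∧
      (∀ s ∈ V, u (T s) s = 0) ∧
      (∀ s ∈ V, |T s| < δ ∧ ∀ t : ℝ, |t| < δ →
        (∫ σ in (0:ℝ)..1, deriv (fun τ => u τ s) (σ * t)) = 0 → t = T s) ∧
      (∀ T' : (Fin k → ℝ) → ℝ,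
        (∀ s ∈ V, |T' s| < δ ∧ (∫ σ in (0:ℝ)..1, deriv (fun τ => u τ s) (σ * T' s)) = 0) →
        Set.EqOn T' T V) ∧
      fderiv ℝ T s₀ = (-2 / iteratedDeriv 2 (fun t => u t s₀) 0) •
        fderiv ℝ (fun s => deriv (fun t => u t s) 0) s₀ :=
  stmt0_general k u s₀ W hWopen hW0 hu hu0 hut hutt
end

section
/- Let u be a C⁴ real-valued function on an open neighborhood of (0, s₀) in ℝ × ℝ such that u(0, s) = 0 for all s near s₀, ∂ₜu(0, s₀) = 0, and ∂ₜ²u(0, s₀) ≠ 0, and let T be the unique C² function with T(s₀) = 0 solving v(T(s), s) = 0, where u(t, s) = t·v(t, s) and v(t, s) = ∫₀¹ ∂ₜu(σt, s) dσ. Then the second derivative of T at s₀ is T''(s₀) = −(2/∂ₜ²u(0,s₀))·[∂ₜ∂ₛ²u(0,s₀) + ∂ₜ²∂ₛu(0,s₀)·T'(s₀) + (1/3)·∂ₜ³u(0,s₀)·T'(s₀)²]. -/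
/-!
Write `v(t, s) = ∫₀¹ ∂ₜu(σt, s) dσ`. Differentiating `v(T(s), s) = 0` under the integral sign, along
the segments `σ ↦ (σ T(s), s)`, gives `T'(s) ∫₀¹ σ ∂ₜ²u(σT(s), s) dσ + ∫₀¹ ∂ₛ∂ₜu(σT(s), s) dσ = 0`
for every `s` near `s₀`. Differentiating once more at `s₀`, where `T(s₀) = 0` collapses every
segment to the point `(0, s₀)`, leaves only the moments `∫₀¹ σᵏ dσ = 1/(k+1)`:
`T''·∂ₜ²u/2 + T'²·∂ₜ³u/3 + T'·(∂ₛ∂ₜ²u + ∂ₜ∂ₛ∂ₜu)/2 + ∂ₛ²∂ₜu = 0`,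
and the symmetry of second derivatives of `∂ₜu` turns this into the formula for `T''(s₀)`.
-/

open Filter Topology Set

noncomputable section

section Partial

variable {E : Type*} [NormedAddCommGroup E] [NormedSpace ℝ E]

def partialFst (f : ℝ × ℝ → E) : ℝ × ℝ → E := fun p => fderiv ℝ f p (1, 0)

def partialSnd (f : ℝ × ℝ → E) : ℝ × ℝ → E := fun p => fderiv ℝ f p (0, 1)

variable {f : ℝ × ℝ → E} {W : Set (ℝ × ℝ)} {t s : ℝ}

theorem DifferentiableAt.hasDerivAt_partialFst (hf : DifferentiableAt ℝ f (t, s)) :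
    HasDerivAt (fun τ => f (τ, s)) (partialFst f (t, s)) t := by
  simpa [partialFst, Function.comp_def] using
    hf.hasFDerivAt.comp_hasDerivAt t ((hasDerivAt_id t).prodMk (hasDerivAt_const t s))

theorem DifferentiableAt.hasDerivAt_partialSnd (hf : DifferentiableAt ℝ f (t, s)) :
    HasDerivAt (fun y => f (t, y)) (partialSnd f (t, s)) s := by
  simpa [partialSnd, Function.comp_def] using
    hf.hasFDerivAt.comp_hasDerivAt s ((hasDerivAt_const s t).prodMk (hasDerivAt_id s))

theorem DifferentiableAt.hasDerivAt_comp_graph {c : ℝ → ℝ} {c' x : ℝ}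
    (hf : DifferentiableAt ℝ f (c x, x)) (hc : HasDerivAt c c' x) :
    HasDerivAt (fun y => f (c y, y)) (c' • partialFst f (c x, x) + partialSnd f (c x, x)) x := by
  have hcurve : HasDerivAt (fun y => (c y, y)) (c' • ((1 : ℝ), (0 : ℝ)) + (0, 1)) x := by
    simpa using hc.prodMk (hasDerivAt_id x)
  have h := hf.hasFDerivAt.comp_hasDerivAt (f := fun y => (c y, y)) x hcurve
  rwa [map_add, map_smul] at h

theorem ContDiffOn.partialFst {n m : WithTop ℕ∞} (hf : ContDiffOn ℝ n f W) (hW : IsOpen W)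
    (hmn : m + 1 ≤ n) : ContDiffOn ℝ m (partialFst f) W :=
  (hf.fderiv_of_isOpen hW hmn).clm_apply contDiffOn_const

theorem ContDiffOn.partialSnd {n m : WithTop ℕ∞} (hf : ContDiffOn ℝ n f W) (hW : IsOpen W)
    (hmn : m + 1 ≤ n) : ContDiffOn ℝ m (partialSnd f) W :=
  (hf.fderiv_of_isOpen hW hmn).clm_apply contDiffOn_const

theorem contDiffOn_iterate_partialFst {n : ℕ} {m : WithTop ℕ∞} (hW : IsOpen W)
    (hf : ContDiffOn ℝ (n + m) f W) : ContDiffOn ℝ m (partialFst^[n] f) W := by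
  induction n generalizing f with
  | zero => simpa using hf
  | succ n ih =>
    rw [Function.iterate_succ_apply]
    exact ih (hf.partialFst hW (by push_cast; rw [add_right_comm]))

theorem ContDiffAt.partialSnd_partialFst {p : ℝ × ℝ} (hf : ContDiffAt ℝ 2 f p) :
    partialSnd (partialFst f) p = partialFst (partialSnd f) p := by
  have hf' : DifferentiableAt ℝ (fderiv ℝ f) p :=
    (hf.fderiv_right (m := 1) le_rfl).differentiableAt one_ne_zero
  change fderiv ℝ (fun q => fderiv ℝ f q (1, 0)) p (0, 1)
    = fderiv ℝ (fun q => fderiv ℝ f q (0, 1)) p (1, 0)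
  simp only [fderiv_clm_apply hf' (differentiableAt_const _), fderiv_const_apply]
  simpa using hf.isSymmSndFDerivAt (by simp) (0, 1) (1, 0)

theorem deriv_fst_slice_eq (hW : IsOpen W) (hf : DifferentiableOn ℝ f W) (hp : (t, s) ∈ W) :
    deriv (fun τ => f (τ, s)) t = partialFst f (t, s) :=
  ((hf _ hp).differentiableAt (hW.mem_nhds hp)).hasDerivAt_partialFst.deriv

theorem iteratedDeriv_fst_slice_eq {n : ℕ} (hW : IsOpen W) (hf : ContDiffOn ℝ n f W)
    (hp : (t, s) ∈ W) : iteratedDeriv n (fun τ => f (τ, s)) t = partialFst^[n] f (t, s) := by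
  induction n generalizing f t with
  | zero => simp
  | succ n ih =>
    have hslice : deriv (fun τ => f (τ, s)) =ᶠ[𝓝 t] fun τ => partialFst f (τ, s) := by
      filter_upwards [(hW.preimage (by fun_prop : Continuous fun τ : ℝ => (τ, s))).mem_nhds hp]
        with τ hτ using deriv_fst_slice_eq hW (hf.differentiableOn (by simp)) hτ
    rw [iteratedDeriv_succ', hslice.iteratedDeriv_eq, Function.iterate_succ_apply]
    exact ih (hf.partialFst hW (by push_cast; rfl)) hp

theorem iteratedDeriv_snd_slice_eq {n : ℕ} (hW : IsOpen W) (hf : ContDiffOn ℝ n f W)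
    (hp : (t, s) ∈ W) : iteratedDeriv n (fun y => f (t, y)) s = partialSnd^[n] f (t, s) := by
  induction n generalizing f s with
  | zero => simp
  | succ n ih =>
    have hslice : deriv (fun y => f (t, y)) =ᶠ[𝓝 s] fun y => partialSnd f (t, y) := by
      filter_upwards [(hW.preimage (by fun_prop : Continuous fun y : ℝ => (t, y))).mem_nhds hp]
        with y hy
      exact (((hf.differentiableOn (by simp)) _ hy).differentiableAt
        (hW.mem_nhds hy)).hasDerivAt_partialSnd.deriv
    rw [iteratedDeriv_succ', hslice.iteratedDeriv_eq, Function.iterate_succ_apply]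
    exact ih (hf.partialSnd hW (by push_cast; rfl)) hp

theorem iteratedDeriv_snd_slice_deriv_fst_slice_eq {n : ℕ} (hW : IsOpen W)
    (hf : ContDiffOn ℝ (n + 1) f W) (hp : (t, s) ∈ W) :
    iteratedDeriv n (fun y => deriv (fun τ => f (τ, y)) t) s =
      partialSnd^[n] (partialFst f) (t, s) := by
  have hslice : (fun y => deriv (fun τ => f (τ, y)) t) =ᶠ[𝓝 s] fun y => partialFst f (t, y) := by
    filter_upwards [(hW.preimage (by fun_prop : Continuous fun y : ℝ => (t, y))).mem_nhds hp]
      with y hy using deriv_fst_slice_eq hW (hf.differentiableOn (by simp)) hy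
  rw [hslice.iteratedDeriv_eq]
  exact iteratedDeriv_snd_slice_eq hW (hf.partialFst hW le_rfl) hp

theorem deriv_snd_slice_iteratedDeriv_fst_slice_eq {n : ℕ} (hW : IsOpen W)
    (hf : ContDiffOn ℝ (n + 1) f W) (hp : (t, s) ∈ W) :
    deriv (fun y => iteratedDeriv n (fun τ => f (τ, y)) t) s =
      partialSnd (partialFst^[n] f) (t, s) := by
  have hslice : (fun y => iteratedDeriv n (fun τ => f (τ, y)) t) =ᶠ[𝓝 s]
      fun y => partialFst^[n] f (t, y) := by
    filter_upwards [(hW.preimage (by fun_prop : Continuous fun y : ℝ => (t, y))).mem_nhds hp]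
      with y hy using iteratedDeriv_fst_slice_eq hW (hf.of_le (by simp)) hy
  rw [hslice.deriv_eq]
  exact (((contDiffOn_iterate_partialFst hW hf).contDiffAt (hW.mem_nhds hp)).differentiableAt
    one_ne_zero).hasDerivAt_partialSnd.deriv

end Partial

theorem HasDerivAt.eq_zero_of_eventuallyEq_zero {𝕜 F : Type*} [NontriviallyNormedField 𝕜]
    [NormedAddCommGroup F] [NormedSpace 𝕜 F] {g : 𝕜 → F} {g' : F} {x : 𝕜}
    (hg : HasDerivAt g g' x) (h : g =ᶠ[𝓝 x] 0) : g' = 0 :=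
  hg.unique ((hasDerivAt_const x 0).congr_of_eventuallyEq h)

theorem hasDerivAt_intervalIntegral_of_continuousOn {E : Type*} [NormedAddCommGroup E]
    [NormedSpace ℝ E] {F F' : ℝ → ℝ → E} {O : Set ℝ} {a b x₀ : ℝ} (hO : IsOpen O) (hx₀ : x₀ ∈ O)
    (hF : ∀ x ∈ O, ContinuousOn (F x) (uIcc a b))
    (hF' : ContinuousOn (Function.uncurry F') (O ×ˢ uIcc a b))
    (hderiv : ∀ x ∈ O, ∀ σ ∈ uIcc a b, HasDerivAt (F · σ) (F' x σ) x) :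
    HasDerivAt (fun x => ∫ σ in a..b, F x σ) (∫ σ in a..b, F' x₀ σ) x₀ := by
  obtain ⟨r, hr, hrO⟩ := Metric.nhds_basis_closedBall.mem_iff.1 (hO.mem_nhds hx₀)
  obtain ⟨C, hC⟩ := ((isCompact_closedBall x₀ r).prod isCompact_uIcc).exists_bound_of_continuousOn
    (hF'.mono (prod_mono hrO le_rfl))
  have hball : Metric.ball x₀ r ⊆ O := Metric.ball_subset_closedBall.trans hrO
  have hF'x₀ : ContinuousOn (F' x₀) (uIcc a b) :=
    hF'.comp (f := fun σ => (x₀, σ)) (by fun_prop) fun σ hσ => ⟨hx₀, hσ⟩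
  refine (intervalIntegral.hasDerivAt_integral_of_dominated_loc_of_deriv_le (bound := fun _ => C)
    (Metric.ball_mem_nhds x₀ hr) ?_ (hF x₀ hx₀).intervalIntegrable
    ((hF'x₀.mono uIoc_subset_uIcc).aestronglyMeasurable measurableSet_uIoc)
    ?_ intervalIntegrable_const ?_).2
  · filter_upwards [hO.mem_nhds hx₀] with x hx
    exact ((hF x hx).mono uIoc_subset_uIcc).aestronglyMeasurable measurableSet_uIoc
  · exact .of_forall fun σ hσ x hx =>
      hC (x, σ) ⟨Metric.ball_subset_closedBall hx, uIoc_subset_uIcc hσ⟩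
  · exact .of_forall fun σ hσ x hx => hderiv x (hball hx) σ (uIoc_subset_uIcc hσ)

section Segments

variable {W : Set (ℝ × ℝ)} {T : ℝ → ℝ} {O : Set ℝ}

theorem eventually_forall_segment_mem {s₀ : ℝ} (hW : W ∈ 𝓝 (0, s₀)) (hT : ContinuousAt T s₀)
    (hT0 : T s₀ = 0) : ∀ᶠ y in 𝓝 s₀, ∀ σ ∈ Icc (0 : ℝ) 1, (σ * T y, y) ∈ W := by
  obtain ⟨ε, hε, hball⟩ := Metric.mem_nhds_iff.1 hW
  filter_upwards [hT (Metric.ball_mem_nhds _ hε), Metric.ball_mem_nhds s₀ hε]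
    with y hTy hy σ hσ
  refine hball (ball_prod_same (0 : ℝ) s₀ ε ▸ ⟨?_, hy⟩)
  rw [mem_preimage, hT0, mem_ball_zero_iff] at hTy
  rw [mem_ball_zero_iff, norm_mul]
  exact (mul_le_of_le_one_left (norm_nonneg _) (by simpa [abs_of_nonneg hσ.1] using hσ.2)).trans_lt
    hTy

theorem ContinuousOn.comp_segment {S : Set ℝ} {g : ℝ × ℝ → ℝ} (hg : ContinuousOn g W)
    (hT : ContinuousOn T O) (hTW : ∀ y ∈ O, ∀ σ ∈ S, (σ * T y, y) ∈ W) :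
    ContinuousOn (fun q : ℝ × ℝ => g (q.2 * T q.1, q.1)) (O ×ˢ S) :=
  hg.comp ((continuousOn_snd.mul (hT.comp continuousOn_fst fun _ hq => hq.1)).prodMk
    continuousOn_fst) fun q hq => hTW q.1 hq.1 q.2 hq.2

theorem hasDerivAt_integral_mul_comp_segment {f : ℝ × ℝ → ℝ} {w : ℝ → ℝ} (hW : IsOpen W)
    (hf : ContDiffOn ℝ 1 f W) (hO : IsOpen O) (hT : ContDiffOn ℝ 1 T O) (hw : Continuous w)
    (hTW : ∀ y ∈ O, ∀ σ ∈ Icc (0 : ℝ) 1, (σ * T y, y) ∈ W) {x : ℝ} (hx : x ∈ O) :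
    HasDerivAt (fun y => ∫ σ in (0 : ℝ)..1, w σ * f (σ * T y, y))
      (deriv T x * (∫ σ in (0 : ℝ)..1, σ * w σ * partialFst f (σ * T x, x)) +
        ∫ σ in (0 : ℝ)..1, w σ * partialSnd f (σ * T x, x)) x := by
  rw [← uIcc_of_le zero_le_one] at hTW
  have hslice : ∀ g : ℝ × ℝ → ℝ, ContinuousOn g W → ∀ y ∈ O,
      ContinuousOn (fun σ => g (σ * T y, y)) (uIcc 0 1) := fun g hg y hy =>
    (hg.comp_segment hT.continuousOn hTW).comp (f := fun σ => (y, σ)) (by fun_prop)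
      fun σ hσ => ⟨hy, hσ⟩
  have hf₁ : ContinuousOn (partialFst f) W := (hf.partialFst hW (m := 0) le_rfl).continuousOn
  have hf₂ : ContinuousOn (partialSnd f) W := (hf.partialSnd hW (m := 0) le_rfl).continuousOn
  have hderiv := hasDerivAt_intervalIntegral_of_continuousOn
    (F := fun y σ => w σ * f (σ * T y, y))
    (F' := fun y σ => w σ * (σ * deriv T y * partialFst f (σ * T y, y) +
      partialSnd f (σ * T y, y))) hO hx
    (fun y hy => hw.continuousOn.mul (hslice f hf.continuousOn y hy))
    ((hw.comp continuous_snd).continuousOn.mul ((continuousOn_snd.mul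
      ((hT.continuousOn_deriv_of_isOpen hO le_rfl).comp continuousOn_fst fun _ hq => hq.1)).mul
        (hf₁.comp_segment hT.continuousOn hTW) |>.add (hf₂.comp_segment hT.continuousOn hTW)))
    (fun y hy σ hσ => by
      have hTy : HasDerivAt T (deriv T y) y :=
        ((hT.differentiableOn one_ne_zero y hy).differentiableAt (hO.mem_nhds hy)).hasDerivAt
      have hfy : DifferentiableAt ℝ f (σ * T y, y) :=
        (hf.differentiableOn one_ne_zero _ (hTW y hy σ hσ)).differentiableAt
          (hW.mem_nhds (hTW y hy σ hσ))
      simpa only [smul_eq_mul] using (hfy.hasDerivAt_comp_graph (hTy.const_mul σ)).const_mul (w σ))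
  refine hderiv.congr_deriv ?_
  have h₁ : IntervalIntegrable (fun σ => σ * w σ * partialFst f (σ * T x, x))
      MeasureTheory.volume 0 1 :=
    ((continuousOn_id.mul hw.continuousOn).mul (hslice _ hf₁ x hx)).intervalIntegrable
  have h₂ : IntervalIntegrable (fun σ => w σ * partialSnd f (σ * T x, x))
      MeasureTheory.volume 0 1 :=
    (hw.continuousOn.mul (hslice _ hf₂ x hx)).intervalIntegrable
  rw [← intervalIntegral.integral_const_mul, ← intervalIntegral.integral_add (h₁.const_mul _) h₂]
  exact intervalIntegral.integral_congr fun σ _ => by ring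

end Segments

/-- The map `v` of the paper: `f (t, s) = f (0, s) + t * reducedMap f t s`. -/
def reducedMap (f : ℝ × ℝ → ℝ) (t s : ℝ) : ℝ :=
  ∫ σ in (0 : ℝ)..1, deriv (fun τ => f (τ, s)) (σ * t)

section RootCurve

variable {f : ℝ × ℝ → ℝ} {W : Set (ℝ × ℝ)} {T : ℝ → ℝ} {O : Set ℝ}

theorem first_order_relation_of_reducedMap_eq_zero (hW : IsOpen W) (hf : ContDiffOn ℝ 2 f W)
    (hO : IsOpen O) (hT : ContDiffOn ℝ 1 T O)
    (hTW : ∀ y ∈ O, ∀ σ ∈ Icc (0 : ℝ) 1, (σ * T y, y) ∈ W)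
    (hroot : ∀ y ∈ O, reducedMap f (T y) y = 0) {x : ℝ} (hx : x ∈ O) :
    deriv T x * (∫ σ in (0 : ℝ)..1, σ * partialFst (partialFst f) (σ * T x, x)) +
      ∫ σ in (0 : ℝ)..1, partialSnd (partialFst f) (σ * T x, x) = 0 := by
  have h := hasDerivAt_integral_mul_comp_segment (w := fun _ => 1) hW (hf.partialFst hW le_rfl) hO
    hT continuous_const hTW hx
  simp only [one_mul, mul_one] at h
  refine h.eq_zero_of_eventuallyEq_zero (eventually_of_mem (hO.mem_nhds hx) fun y hy => ?_)
  refine Eq.trans (intervalIntegral.integral_congr fun σ hσ => ?_) (hroot y hy)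
  rw [uIcc_of_le zero_le_one] at hσ
  exact (deriv_fst_slice_eq hW (hf.differentiableOn two_ne_zero) (hTW y hy σ hσ)).symm

theorem second_order_relation_of_reducedMap_eq_zero (hW : IsOpen W) (hf : ContDiffOn ℝ 3 f W)
    (hO : IsOpen O) (hT : ContDiffOn ℝ 2 T O)
    (hTW : ∀ y ∈ O, ∀ σ ∈ Icc (0 : ℝ) 1, (σ * T y, y) ∈ W)
    (hroot : ∀ y ∈ O, reducedMap f (T y) y = 0) {s₀ : ℝ} (hs₀ : s₀ ∈ O) (hT0 : T s₀ = 0) :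
    deriv (deriv T) s₀ * partialFst (partialFst f) (0, s₀) / 2
      + deriv T s₀ ^ 2 * partialFst (partialFst (partialFst f)) (0, s₀) / 3
      + deriv T s₀ * partialSnd (partialFst (partialFst f)) (0, s₀)
      + partialSnd (partialSnd (partialFst f)) (0, s₀) = 0 := by
  have hf₁ : ContDiffOn ℝ 2 (partialFst f) W := hf.partialFst hW le_rfl
  have hT₁ : ContDiffOn ℝ 1 T O := hT.of_le one_le_two
  have hT' : HasDerivAt (deriv T) (deriv (deriv T) s₀) s₀ :=
    (((hT.deriv_of_isOpen hO le_rfl).differentiableOn one_ne_zero s₀ hs₀).differentiableAt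
      (hO.mem_nhds hs₀)).hasDerivAt
  have hA := hasDerivAt_integral_mul_comp_segment (w := id) hW (hf₁.partialFst hW le_rfl) hO hT₁
    continuous_id hTW hs₀
  have hB := hasDerivAt_integral_mul_comp_segment (w := fun _ => 1) hW (hf₁.partialSnd hW le_rfl)
    hO hT₁ continuous_const hTW hs₀
  simp only [id, one_mul, mul_one] at hA hB
  have h := ((hT'.mul hA).add hB).eq_zero_of_eventuallyEq_zero (eventually_of_mem
    (hO.mem_nhds hs₀) fun x hx =>
      first_order_relation_of_reducedMap_eq_zero hW (hf.of_le (by norm_num)) hO hT₁ hTW hroot hx)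
  have hsymm : partialSnd (partialFst (partialFst f)) (0, s₀) =
      partialFst (partialSnd (partialFst f)) (0, s₀) :=
    (hf₁.contDiffAt (hW.mem_nhds (by simpa [hT0] using hTW s₀ hs₀ 0 (by simp))))
      |>.partialSnd_partialFst
  simp only [hT0, mul_zero, ← sq, intervalIntegral.integral_mul_const, integral_id, integral_pow,
    intervalIntegral.integral_const, one_pow, zero_pow, ne_eq, OfNat.ofNat_ne_zero,
    not_false_eq_true, sub_zero, one_div, Nat.reduceAdd, Nat.cast_ofNat, smul_eq_mul,
    one_mul] at h
  rw [hsymm] at h ⊢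
  linear_combination h

end RootCurve

theorem stmt1_general (u : ℝ → ℝ → ℝ) (s₀ : ℝ)
    (W : Set (ℝ × ℝ)) (hWopen : IsOpen W) (hW0 : ((0 : ℝ), s₀) ∈ W)
    (hu : ContDiffOn ℝ 4 (fun p => u p.1 p.2) W)
    (hutt : iteratedDeriv 2 (fun t => u t s₀) 0 ≠ 0)
    (T : ℝ → ℝ) (hT0 : T s₀ = 0) (hTC2 : ContDiffAt ℝ 2 T s₀)
    (hTroot : ∀ᶠ s in 𝓝 s₀, (∫ σ in (0:ℝ)..1, deriv (fun τ => u τ s) (σ * T s)) = 0) :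
    iteratedDeriv 2 T s₀ = -(2 / iteratedDeriv 2 (fun t => u t s₀) 0) *
      (iteratedDeriv 2 (fun s => deriv (fun t => u t s) 0) s₀
        + deriv (fun s => iteratedDeriv 2 (fun t => u t s) 0) s₀ * deriv T s₀
        + 1 / 3 * iteratedDeriv 3 (fun t => u t s₀) 0 * deriv T s₀ ^ 2) := by
  set f : ℝ × ℝ → ℝ := Function.uncurry u
  obtain ⟨O, hOprop, hO, hs₀O⟩ := eventually_nhds_iff.1 ((hTC2.eventually (by simp)).and
    ((eventually_forall_segment_mem (hWopen.mem_nhds hW0) hTC2.continuousAt hT0).and hTroot))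
  have key := second_order_relation_of_reducedMap_eq_zero (f := f) hWopen
    (hu.of_le (by norm_num)) hO (fun y hy => (hOprop y hy).1.contDiffWithinAt)
    (fun y hy => (hOprop y hy).2.1) (fun y hy => (hOprop y hy).2.2) hs₀O hT0
  have htt : iteratedDeriv 2 (fun t => u t s₀) 0 = partialFst (partialFst f) (0, s₀) :=
    iteratedDeriv_fst_slice_eq (n := 2) (f := f) hWopen (hu.of_le (by norm_num)) hW0
  have httt :
      iteratedDeriv 3 (fun t => u t s₀) 0 = partialFst (partialFst (partialFst f)) (0, s₀) :=
    iteratedDeriv_fst_slice_eq (n := 3) (f := f) hWopen (hu.of_le (by norm_num)) hW0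
  have htss : iteratedDeriv 2 (fun s => deriv (fun t => u t s) 0) s₀
      = partialSnd (partialSnd (partialFst f)) (0, s₀) :=
    iteratedDeriv_snd_slice_deriv_fst_slice_eq (n := 2) (f := f) hWopen (hu.of_le (by norm_num)) hW0
  have htts : deriv (fun s => iteratedDeriv 2 (fun t => u t s) 0) s₀
      = partialSnd (partialFst (partialFst f)) (0, s₀) :=
    deriv_snd_slice_iteratedDeriv_fst_slice_eq (n := 2) (f := f) hWopen (hu.of_le (by norm_num)) hW0
  rw [htt] at hutt
  rw [iteratedDeriv_succ, iteratedDeriv_one, htt, httt, htss, htts]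
  field_simp
  linear_combination 6 * key

/-- the quadratic coefficient of the nontrivial return time at a fold point.
If `u` is `C⁴` near `(0,s₀) ∈ ℝ × ℝ` with `u(0,s) = 0` for `s` near `s₀`, `∂ₜu(0,s₀) = 0`,
`∂ₜ²u(0,s₀) ≠ 0`, and `T` is the `C²` function with `T(s₀) = 0` solving `v(T(s),s) = 0`
(where `u(t,s) = t·v(t,s)`, `v(t,s) = ∫₀¹ ∂ₜu(σt,s)dσ`), then
`T''(s₀) = −(2/∂ₜ²u(0,s₀))·[∂ₜ∂ₛ²u(0,s₀) + ∂ₜ²∂ₛu(0,s₀)·T'(s₀) + (1/3)∂ₜ³u(0,s₀)·T'(s₀)²]`. -/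
theorem stmt1 (u : ℝ → ℝ → ℝ) (s₀ : ℝ)
    (W : Set (ℝ × ℝ)) (hWopen : IsOpen W) (hW0 : ((0 : ℝ), s₀) ∈ W)
    (hu : ContDiffOn ℝ 4 (fun p => u p.1 p.2) W)
    (hu0 : ∀ᶠ s in 𝓝 s₀, u 0 s = 0)
    (hut : deriv (fun t => u t s₀) 0 = 0)
    (hutt : iteratedDeriv 2 (fun t => u t s₀) 0 ≠ 0)
    (T : ℝ → ℝ) (hT0 : T s₀ = 0) (hTC2 : ContDiffAt ℝ 2 T s₀)
    (hTroot : ∀ᶠ s in 𝓝 s₀, (∫ σ in (0:ℝ)..1, deriv (fun τ => u τ s) (σ * T s)) = 0) :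
    iteratedDeriv 2 T s₀ = -(2 / iteratedDeriv 2 (fun t => u t s₀) 0) *
      (iteratedDeriv 2 (fun s => deriv (fun t => u t s) 0) s₀
        + deriv (fun s => iteratedDeriv 2 (fun t => u t s) 0) s₀ * deriv T s₀
        + 1 / 3 * iteratedDeriv 3 (fun t => u t s₀) 0 * deriv T s₀ ^ 2) :=
  stmt1_general u s₀ W hWopen hW0 hu hutt T hT0 hTC2 hTroot
end
end

section
/- Let (Xⁱ, Yⁱ, Zⁱ)(t) be the solution of the i-th smooth subsystem ẋ = f(x,y), ẏ = g(x,y) + gⁱ(0), ż = hⁱ(y,z,0) with initial condition (x₀, y₀, z₀) at t = 0, and let u(t) = H(Yⁱ(t), Zⁱ(t)) = (a+b)·Yⁱ(t) − a − b·Zⁱ(t). Then u(0) = 0, u'(0) = 0, and u''(0) = hⁱ·Dⁱ, where Dⁱ = b·g_y − (b²/(a+b))·hⁱ_y − b·hⁱ_z. -/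
open Filter Topology Asymptotics
open scoped ContDiff

noncomputable section

/-- The data of the piecewise-smooth system `ẋ = f(x,y)`, `ẏ = g(x,y) + gⁱ(ε)`,
`ż = hⁱ(y,z,ε)` with switching function `H(y,z) = (a+b)y − a − bz`, together with the
degenerate fold–fold point `(x₀,y₀,z₀)` on the switching plane. -/
structure SysData where
  a : ℝ
  b : ℝ
  f : ℝ → ℝ → ℝ
  g : ℝ → ℝ → ℝ
  gm : ℝ → ℝ
  gp : ℝ → ℝ
  hm : ℝ → ℝ → ℝ → ℝ
  hp : ℝ → ℝ → ℝ → ℝ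
  x₀ : ℝ
  y₀ : ℝ
  z₀ : ℝ
  hb : 0 < b
  hab : 0 < a + b
  smooth_f : ContDiff ℝ ∞ fun p : ℝ × ℝ => f p.1 p.2
  smooth_g : ContDiff ℝ ∞ fun p : ℝ × ℝ => g p.1 p.2
  smooth_gm : ContDiff ℝ ∞ gm
  smooth_gp : ContDiff ℝ ∞ gp
  smooth_hm : ContDiff ℝ ∞ fun p : ℝ × ℝ × ℝ => hm p.1 p.2.1 p.2.2
  smooth_hp : ContDiff ℝ ∞ fun p : ℝ × ℝ × ℝ => hp p.1 p.2.1 p.2.2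
  onL : (a + b) * y₀ - a - b * z₀ = 0
  border : f x₀ y₀ = 0
  foldm : (a + b) * (g x₀ y₀ + gm 0) - b * hm y₀ z₀ 0 = 0
  foldp : (a + b) * (g x₀ y₀ + gp 0) - b * hp y₀ z₀ 0 = 0

namespace SysData

variable (S : SysData)

/-- The switching function `H` on `ℝ³`. -/
def Hfun (p : ℝ × ℝ × ℝ) : ℝ := (S.a + S.b) * p.2.1 - S.a - S.b * p.2.2

/-- `ζ(z) = (a+bz)/(a+b)`, so that `(x, ζ(z), z)` lies on the switching plane. -/
def zeta (z : ℝ) : ℝ := (S.a + S.b * z) / (S.a + S.b)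

/-- `ζ'(0) = b/(a+b)`. -/
def zp0 : ℝ := S.b / (S.a + S.b)

def g0 : ℝ := S.g S.x₀ S.y₀
def gm0 : ℝ := S.gm 0
def gp0 : ℝ := S.gp 0
def hm0 : ℝ := S.hm S.y₀ S.z₀ 0
def hp0 : ℝ := S.hp S.y₀ S.z₀ 0

def fx : ℝ := deriv (fun x => S.f x S.y₀) S.x₀
def fy : ℝ := deriv (fun y => S.f S.x₀ y) S.y₀
def fyy : ℝ := iteratedDeriv 2 (fun y => S.f S.x₀ y) S.y₀
def gx : ℝ := deriv (fun x => S.g x S.y₀) S.x₀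
def gy : ℝ := deriv (fun y => S.g S.x₀ y) S.y₀
def gyy : ℝ := iteratedDeriv 2 (fun y => S.g S.x₀ y) S.y₀

def hmy : ℝ := deriv (fun y => S.hm y S.z₀ 0) S.y₀
def hmz : ℝ := deriv (fun z => S.hm S.y₀ z 0) S.z₀
def hme : ℝ := deriv (fun e => S.hm S.y₀ S.z₀ e) 0
def hmyy : ℝ := iteratedDeriv 2 (fun y => S.hm y S.z₀ 0) S.y₀
def hmzz : ℝ := iteratedDeriv 2 (fun z => S.hm S.y₀ z 0) S.z₀
def hmyz : ℝ := deriv (fun y => deriv (fun z => S.hm y z 0) S.z₀) S.y₀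
def hmzy : ℝ := deriv (fun z => deriv (fun y => S.hm y z 0) S.y₀) S.z₀

def hpy : ℝ := deriv (fun y => S.hp y S.z₀ 0) S.y₀
def hpz : ℝ := deriv (fun z => S.hp S.y₀ z 0) S.z₀
def hpe : ℝ := deriv (fun e => S.hp S.y₀ S.z₀ e) 0
def hpyy : ℝ := iteratedDeriv 2 (fun y => S.hp y S.z₀ 0) S.y₀
def hpzz : ℝ := iteratedDeriv 2 (fun z => S.hp S.y₀ z 0) S.z₀
def hpyz : ℝ := deriv (fun y => deriv (fun z => S.hp y z 0) S.z₀) S.y₀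
def hpzy : ℝ := deriv (fun z => deriv (fun y => S.hp y z 0) S.y₀) S.z₀

/-- `D⁻ = b·g_y − (b²/(a+b))·h⁻_y − b·h⁻_z`. -/
def Dm : ℝ := S.b * S.gy - S.b ^ 2 / (S.a + S.b) * S.hmy - S.b * S.hmz
/-- `D⁺ = b·g_y − (b²/(a+b))·h⁺_y − b·h⁺_z`. -/
def Dp : ℝ := S.b * S.gy - S.b ^ 2 / (S.a + S.b) * S.hpy - S.b * S.hpz

/-- `ᾱ⁻ = −2(a+b)g_x/D⁻`. -/
def albm : ℝ := -2 * ((S.a + S.b) * S.gx) / S.Dm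
def albp : ℝ := -2 * ((S.a + S.b) * S.gx) / S.Dp

/-- `γ̄⁻ = −2[(a+b)(g⁻)′(0) − b·h⁻_ε]/D⁻`. -/
def gbm : ℝ := -2 * ((S.a + S.b) * deriv S.gm 0 - S.b * S.hme) / S.Dm
def gbp : ℝ := -2 * ((S.a + S.b) * deriv S.gp 0 - S.b * S.hpe) / S.Dp

/-- `β⁻ = −2/h⁻`. -/
def betm : ℝ := -2 / S.hm0
def betp : ℝ := -2 / S.hp0

/-- `k̄̄⁻`. -/
def kbbm : ℝ :=
  (S.a + S.b) / 6 * (S.gx * S.fy + S.gyy * (S.g0 + S.gm0) + S.gy ^ 2)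
    - S.b / 6 * (S.hmyy + (S.a + S.b) / S.b * S.hmyz + (S.a + S.b) / S.b * S.hmzy
        + (S.a + S.b) ^ 2 / S.b ^ 2 * S.hmzz)
    - S.b / 6 * (S.hmy * S.gy + S.hmz * S.hmy + (S.a + S.b) / S.b * S.hmz ^ 2)
def kbbp : ℝ :=
  (S.a + S.b) / 6 * (S.gx * S.fy + S.gyy * (S.g0 + S.gp0) + S.gy ^ 2)
    - S.b / 6 * (S.hpyy + (S.a + S.b) / S.b * S.hpyz + (S.a + S.b) / S.b * S.hpzy
        + (S.a + S.b) ^ 2 / S.b ^ 2 * S.hpzz)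
    - S.b / 6 * (S.hpy * S.gy + S.hpz * S.hpy + (S.a + S.b) / S.b * S.hpz ^ 2)

/-- `k̃⁻`. -/
def ktilm : ℝ :=
  (S.a + S.b) / 2 * (S.gx * S.fy + S.gyy * (S.g0 + S.gm0) + S.gy ^ 2) * S.zp0
    - S.b / 2 * (S.hmyy + (S.a + S.b) / S.b * S.hmzy) * (S.g0 + S.gm0) * S.zp0
    - S.b / 2 * (S.hmy * S.gy + S.hmz * S.hmy) * S.zp0
    - S.b / 2 * (S.hmyz + (S.a + S.b) / S.b * S.hmzz) * (S.g0 + S.gm0)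
    - S.b / 2 * S.hmz ^ 2
def ktilp : ℝ :=
  (S.a + S.b) / 2 * (S.gx * S.fy + S.gyy * (S.g0 + S.gp0) + S.gy ^ 2) * S.zp0
    - S.b / 2 * (S.hpyy + (S.a + S.b) / S.b * S.hpzy) * (S.g0 + S.gp0) * S.zp0
    - S.b / 2 * (S.hpy * S.gy + S.hpz * S.hpy) * S.zp0
    - S.b / 2 * (S.hpyz + (S.a + S.b) / S.b * S.hpzz) * (S.g0 + S.gp0)
    - S.b / 2 * S.hpz ^ 2

/-- `k̂⁻`. -/
def khatm : ℝ :=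
  (S.a + S.b) / 2 * S.gyy * S.zp0 ^ 2
    - S.b * (1 / 2 * S.hmyy * S.zp0 ^ 2 + S.hmyz * S.zp0 + 1 / 2 * S.hmzz)
def khatp : ℝ :=
  (S.a + S.b) / 2 * S.gyy * S.zp0 ^ 2
    - S.b * (1 / 2 * S.hpyy * S.zp0 ^ 2 + S.hpyz * S.zp0 + 1 / 2 * S.hpzz)

/-- `η̄⁻`. -/
def etabm : ℝ :=
  -(4 / S.Dm) * (4 * S.b / (S.a + S.b) * S.kbbm / S.hm0 - 2 * S.ktilm / S.hm0 + S.khatm)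
def etabp : ℝ :=
  -(4 / S.Dp) * (4 * S.b / (S.a + S.b) * S.kbbp / S.hp0 - 2 * S.ktilp / S.hp0 + S.khatp)

/-- `A⁻ = f_x + ½f_y(g+g⁻₀)`. -/
def Am : ℝ := S.fx + 1 / 2 * S.fy * (S.g0 + S.gm0)
def Ap : ℝ := S.fx + 1 / 2 * S.fy * (S.g0 + S.gp0)

/-- `B⁻`. -/
def Bm : ℝ :=
  1 / 2 * S.fy * (S.b / (S.a + S.b)) * S.etabm
    + 4 * S.b / ((S.a + S.b) * S.hm0) *
        (1 / 6 * S.fx * S.gy + 1 / 6 * S.fyy * (S.g0 + S.gm0) + 1 / 6 * S.fy * S.gy)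
    - (S.fx * S.fy + S.fy * S.gy) * (S.b / ((S.a + S.b) * S.hm0))
    - 1 / 2 * S.fyy * S.b ^ 2 / (S.a + S.b) ^ 2
def Bp : ℝ :=
  1 / 2 * S.fy * (S.b / (S.a + S.b)) * S.etabp
    + 4 * S.b / ((S.a + S.b) * S.hp0) *
        (1 / 6 * S.fx * S.gy + 1 / 6 * S.fyy * (S.g0 + S.gp0) + 1 / 6 * S.fy * S.gy)
    - (S.fx * S.fy + S.fy * S.gy) * (S.b / ((S.a + S.b) * S.hp0))
    - 1 / 2 * S.fyy * S.b ^ 2 / (S.a + S.b) ^ 2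

/-- `C⁻ = ½f_y(b/(a+b))γ̄⁻`. -/
def Cm : ℝ := 1 / 2 * S.fy * (S.b / (S.a + S.b)) * S.gbm
def Cp : ℝ := 1 / 2 * S.fy * (S.b / (S.a + S.b)) * S.gbp

/-- `k = −(η̄⁻−η̄⁺)/(ᾱ⁻−ᾱ⁺)`. -/
def kcoef : ℝ := -(S.etabm - S.etabp) / (S.albm - S.albp)
/-- `m = −(γ̄⁻−γ̄⁺)/(ᾱ⁻−ᾱ⁺)`. -/
def mcoef : ℝ := -(S.gbm - S.gbp) / (S.albm - S.albp)

/-- `K = 2(kA⁺+B⁺)/h⁺ − 2(kA⁻+B⁻)/h⁻`. -/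
def Kc : ℝ := 2 * (S.kcoef * S.Ap + S.Bp) / S.hp0 - 2 * (S.kcoef * S.Am + S.Bm) / S.hm0
/-- `M = (mA⁻+C⁻)β⁻ − (mA⁺+C⁺)β⁺`. -/
def Mc : ℝ := (S.mcoef * S.Am + S.Cm) * S.betm - (S.mcoef * S.Ap + S.Cp) * S.betp

end SysData

/-- `(X,Y,Z)` is the (jointly smooth) general solution of the smooth subsystem
`ẋ = f(x,y)`, `ẏ = g(x,y) + gi(ε)`, `ż = hi(y,z,ε)` with initial condition
`(x̄,ȳ,z̄)` at `t = 0`. -/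
structure IsSol (S : SysData) (gi : ℝ → ℝ) (hi : ℝ → ℝ → ℝ → ℝ)
    (X Y Z : ℝ → ℝ → ℝ → ℝ → ℝ → ℝ) : Prop where
  init_x : ∀ x y z ε, X 0 x y z ε = x
  init_y : ∀ x y z ε, Y 0 x y z ε = y
  init_z : ∀ x y z ε, Z 0 x y z ε = z
  ode_x : ∀ t x y z ε,
    HasDerivAt (fun τ => X τ x y z ε) (S.f (X t x y z ε) (Y t x y z ε)) t
  ode_y : ∀ t x y z ε,
    HasDerivAt (fun τ => Y τ x y z ε) (S.g (X t x y z ε) (Y t x y z ε) + gi ε) t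
  ode_z : ∀ t x y z ε,
    HasDerivAt (fun τ => Z τ x y z ε) (hi (Y t x y z ε) (Z t x y z ε) ε) t
  smooth_X : ContDiff ℝ ∞ fun p : ℝ × ℝ × ℝ × ℝ × ℝ =>
    X p.1 p.2.1 p.2.2.1 p.2.2.2.1 p.2.2.2.2
  smooth_Y : ContDiff ℝ ∞ fun p : ℝ × ℝ × ℝ × ℝ × ℝ =>
    Y p.1 p.2.1 p.2.2.1 p.2.2.2.1 p.2.2.2.2
  smooth_Z : ContDiff ℝ ∞ fun p : ℝ × ℝ × ℝ × ℝ × ℝ =>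
    Z p.1 p.2.1 p.2.2.1 p.2.2.2.1 p.2.2.2.2

/-- `u(t,x,z,ε) = H(Y(t,x,ζ(z),z,ε), Z(t,x,ζ(z),z,ε))`. -/
def uFun (S : SysData) (Y Z : ℝ → ℝ → ℝ → ℝ → ℝ → ℝ) (t x z ε : ℝ) : ℝ :=
  (S.a + S.b) * Y t x (S.zeta z) z ε - S.a - S.b * Z t x (S.zeta z) z ε

/-- `v(t,x,z,ε) = ∫₀¹ ∂ₜu(σt,x,z,ε) dσ`, so that `u = t·v`; the nonzero root of `u(·,x,z,ε)`
near `0` is the root of `v(·,x,z,ε)`. -/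
def vFun (S : SysData) (Y Z : ℝ → ℝ → ℝ → ℝ → ℝ → ℝ) (t x z ε : ℝ) : ℝ :=
  ∫ σ in (0:ℝ)..1, deriv (fun τ => uFun S Y Z τ x z ε) (σ * t)

/-- `T` is the `C²` nontrivial return-time function: `T(x₀,z₀,0) = 0`, the point
`(X,Y,Z)(T(x,z,ε),x,ζ(z),z,ε)` lies on `L`, and `T(x,z,ε)` is the unique root near `0` of the
function `v` obtained from `u = H∘(Y,Z)` after factoring out the trivial root `t = 0`. -/
structure IsReturnTime (S : SysData) (Y Z : ℝ → ℝ → ℝ → ℝ → ℝ → ℝ)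
    (T : ℝ → ℝ → ℝ → ℝ) : Prop where
  base : T S.x₀ S.z₀ 0 = 0
  smooth : ∃ U ∈ 𝓝 ((S.x₀, S.z₀, (0:ℝ)) : ℝ × ℝ × ℝ),
    ContDiffOn ℝ 2 (fun p : ℝ × ℝ × ℝ => T p.1 p.2.1 p.2.2) U
  root : ∃ δ > (0:ℝ), ∃ U ∈ 𝓝 ((S.x₀, S.z₀, (0:ℝ)) : ℝ × ℝ × ℝ), ∀ p ∈ U,
    uFun S Y Z (T p.1 p.2.1 p.2.2) p.1 p.2.1 p.2.2 = 0 ∧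
    vFun S Y Z (T p.1 p.2.1 p.2.2) p.1 p.2.1 p.2.2 = 0 ∧
    |T p.1 p.2.1 p.2.2| < δ ∧
    ∀ t : ℝ, |t| < δ → vFun S Y Z t p.1 p.2.1 p.2.2 = 0 → t = T p.1 p.2.1 p.2.2

/-- The half-Poincaré map `(x,z) ↦ (X,Z)(T(x,z,ε), x, ζ(z), z, ε)` of the switching plane,
in the coordinates `(x,z)`. -/
def halfP (S : SysData) (X Z : ℝ → ℝ → ℝ → ℝ → ℝ → ℝ) (T : ℝ → ℝ → ℝ → ℝ)
    (ε : ℝ) (p : ℝ × ℝ) : ℝ × ℝ :=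
  (X (T p.1 p.2 ε) p.1 (S.zeta p.2) p.2 ε, Z (T p.1 p.2 ε) p.1 (S.zeta p.2) p.2 ε)

/-- The flow map of a subsystem on `ℝ³`. -/
def flow3 (X Y Z : ℝ → ℝ → ℝ → ℝ → ℝ → ℝ) (ε t : ℝ) (p : ℝ × ℝ × ℝ) : ℝ × ℝ × ℝ :=
  (X t p.1 p.2.1 p.2.2 ε, Y t p.1 p.2.1 p.2.2 ε, Z t p.1 p.2.1 p.2.2 ε)

/-!
Differentiating `u = (a+b)Y − a − bZ` along the flow gives `u' = (a+b)(g + gⁱ) − b hⁱ`, which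
vanishes at the fold–fold point. Differentiating once more by the chain rule, the border-collision
condition kills the `g_x ẋ` term and the fold condition gives `ẏ(0) = b hⁱ/(a+b)`, so that
`u''(0) = hⁱ Dⁱ`.
-/

theorem hasDerivAt_comp₂_of_differentiableAt {F : ℝ → ℝ → ℝ} {x y : ℝ → ℝ} {x' y' t : ℝ}
    (hF : DifferentiableAt ℝ (fun p : ℝ × ℝ => F p.1 p.2) (x t, y t))
    (hx : HasDerivAt x x' t) (hy : HasDerivAt y y' t) :
    HasDerivAt (fun s => F (x s) (y s))
      (x' * deriv (fun u => F u (y t)) (x t) + y' * deriv (fun v => F (x t) v) (y t)) t := by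
  set L := fderiv ℝ (fun p : ℝ × ℝ => F p.1 p.2) (x t, y t)
  have hL : HasFDerivAt (fun p : ℝ × ℝ => F p.1 p.2) L (x t, y t) := hF.hasFDerivAt
  have h₁ : HasDerivAt (fun u => F u (y t)) (L (1, 0)) (x t) :=
    hL.comp_hasDerivAt (f := fun u => (u, y t)) _
      ((hasDerivAt_id _).prodMk (hasDerivAt_const _ _))
  have h₂ : HasDerivAt (fun v => F (x t) v) (L (0, 1)) (y t) :=
    hL.comp_hasDerivAt (f := fun v => (x t, v)) _
      ((hasDerivAt_const _ _).prodMk (hasDerivAt_id _))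
  have hlin : L (x', y') = x' * L (1, 0) + y' * L (0, 1) := by
    rw [show ((x', y') : ℝ × ℝ) = x' • ((1 : ℝ), (0 : ℝ)) + y' • ((0 : ℝ), (1 : ℝ)) by simp,
      map_add, map_smul, map_smul, smul_eq_mul, smul_eq_mul]
  rw [h₁.deriv, h₂.deriv, ← hlin]
  exact hL.comp_hasDerivAt t (hx.prodMk hy)

theorem ContDiff.differentiableAt_fix_third {h : ℝ → ℝ → ℝ → ℝ}
    (hh : ContDiff ℝ ∞ fun p : ℝ × ℝ × ℝ => h p.1 p.2.1 p.2.2) (ε : ℝ) (q : ℝ × ℝ) :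
    DifferentiableAt ℝ (fun p : ℝ × ℝ => h p.1 p.2 ε) q :=
  (hh.differentiable (by simp) _).comp q
    (differentiableAt_fst.prodMk (differentiableAt_snd.prodMk (differentiableAt_const ε)))

namespace IsSol

variable {S : SysData} {gi : ℝ → ℝ} {hi : ℝ → ℝ → ℝ → ℝ} {X Y Z : ℝ → ℝ → ℝ → ℝ → ℝ → ℝ}

theorem deriv_switching (hSol : IsSol S gi hi X Y Z) (x y z ε : ℝ) :
    deriv (fun t => (S.a + S.b) * Y t x y z ε - S.a - S.b * Z t x y z ε) =
      fun t => (S.a + S.b) * (S.g (X t x y z ε) (Y t x y z ε) + gi ε)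
        - S.b * hi (Y t x y z ε) (Z t x y z ε) ε := by
  funext t
  exact ((((hSol.ode_y t x y z ε).const_mul _).sub_const _).fun_sub
    ((hSol.ode_z t x y z ε).const_mul _)).deriv

theorem iteratedDeriv_two_switching (hSol : IsSol S gi hi X Y Z)
    (hhi : ContDiff ℝ ∞ fun p : ℝ × ℝ × ℝ => hi p.1 p.2.1 p.2.2) (x y z ε : ℝ) :
    iteratedDeriv 2 (fun t => (S.a + S.b) * Y t x y z ε - S.a - S.b * Z t x y z ε) 0 =
      (S.a + S.b) * (S.f x y * deriv (fun u => S.g u y) x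
          + (S.g x y + gi ε) * deriv (fun v => S.g x v) y)
        - S.b * ((S.g x y + gi ε) * deriv (fun v => hi v z ε) y
          + hi y z ε * deriv (fun w => hi y w ε) z) := by
  have hX := hSol.ode_x 0 x y z ε
  have hY := hSol.ode_y 0 x y z ε
  have hZ := hSol.ode_z 0 x y z ε
  have hg := hasDerivAt_comp₂_of_differentiableAt (S.smooth_g.differentiable (by simp) _) hX hY
  have hh := hasDerivAt_comp₂_of_differentiableAt (F := fun v w => hi v w ε)
    (hhi.differentiableAt_fix_third ε _) hY hZ
  have hu' := ((hg.add_const (gi ε)).const_mul (S.a + S.b)).fun_sub (hh.const_mul S.b)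
  rw [iteratedDeriv_succ, iteratedDeriv_one, hSol.deriv_switching, hu'.deriv]
  simp only [hSol.init_x, hSol.init_y, hSol.init_z]

theorem switching_jet_at_foldFold (hSol : IsSol S gi hi X Y Z)
    (hhi : ContDiff ℝ ∞ fun p : ℝ × ℝ × ℝ => hi p.1 p.2.1 p.2.2)
    (fold : (S.a + S.b) * (S.g S.x₀ S.y₀ + gi 0) - S.b * hi S.y₀ S.z₀ 0 = 0) :
    (S.a + S.b) * Y 0 S.x₀ S.y₀ S.z₀ 0 - S.a - S.b * Z 0 S.x₀ S.y₀ S.z₀ 0 = 0 ∧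
    deriv (fun t => (S.a + S.b) * Y t S.x₀ S.y₀ S.z₀ 0 - S.a
      - S.b * Z t S.x₀ S.y₀ S.z₀ 0) 0 = 0 ∧
    iteratedDeriv 2 (fun t => (S.a + S.b) * Y t S.x₀ S.y₀ S.z₀ 0 - S.a
      - S.b * Z t S.x₀ S.y₀ S.z₀ 0) 0 =
      hi S.y₀ S.z₀ 0 * (S.b * S.gy - S.b ^ 2 / (S.a + S.b) *
        deriv (fun y => hi y S.z₀ 0) S.y₀ - S.b * deriv (fun z => hi S.y₀ z 0) S.z₀) := by
  refine ⟨?_, ?_, ?_⟩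
  · rw [hSol.init_y, hSol.init_z]
    exact S.onL
  · rw [hSol.deriv_switching]
    simpa only [hSol.init_x, hSol.init_y, hSol.init_z] using fold
  · have hab : S.a + S.b ≠ 0 := S.hab.ne'
    have hvel : S.g S.x₀ S.y₀ + gi 0 = S.b * hi S.y₀ S.z₀ 0 / (S.a + S.b) := by
      rw [eq_div_iff hab]
      linarith
    rw [hSol.iteratedDeriv_two_switching hhi, S.border, hvel, SysData.gy]
    field_simp
    ring

end IsSol

/-- along each subsystem's solution starting at the degenerate fold–fold point
`(x₀,y₀,z₀)` with `ε = 0`, the function `u(t) = H(Yⁱ(t), Zⁱ(t))` satisfies `u(0) = 0`,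
`u'(0) = 0` and `u''(0) = hⁱ·Dⁱ`. -/
theorem stmt2 (S : SysData) (Xm Ym Zm Xp Yp Zp : ℝ → ℝ → ℝ → ℝ → ℝ → ℝ)
    (hSolm : IsSol S S.gm S.hm Xm Ym Zm) (hSolp : IsSol S S.gp S.hp Xp Yp Zp) :
    ((S.a + S.b) * Ym 0 S.x₀ S.y₀ S.z₀ 0 - S.a - S.b * Zm 0 S.x₀ S.y₀ S.z₀ 0 = 0 ∧
      deriv (fun t => (S.a + S.b) * Ym t S.x₀ S.y₀ S.z₀ 0 - S.a
        - S.b * Zm t S.x₀ S.y₀ S.z₀ 0) 0 = 0 ∧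
      iteratedDeriv 2 (fun t => (S.a + S.b) * Ym t S.x₀ S.y₀ S.z₀ 0 - S.a
        - S.b * Zm t S.x₀ S.y₀ S.z₀ 0) 0 = S.hm0 * S.Dm) ∧
    ((S.a + S.b) * Yp 0 S.x₀ S.y₀ S.z₀ 0 - S.a - S.b * Zp 0 S.x₀ S.y₀ S.z₀ 0 = 0 ∧
      deriv (fun t => (S.a + S.b) * Yp t S.x₀ S.y₀ S.z₀ 0 - S.a
        - S.b * Zp t S.x₀ S.y₀ S.z₀ 0) 0 = 0 ∧
      iteratedDeriv 2 (fun t => (S.a + S.b) * Yp t S.x₀ S.y₀ S.z₀ 0 - S.a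
        - S.b * Zp t S.x₀ S.y₀ S.z₀ 0) 0 = S.hp0 * S.Dp) :=
  ⟨hSolm.switching_jet_at_foldFold S.smooth_hm S.foldm,
    hSolp.switching_jet_at_foldFold S.smooth_hp S.foldp⟩
end
end
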